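/- The map φ : H(R^n) → M_{2^n}(R) sending (v,w) to [[0, S_{n−1}(v,w)],[conj(S_{n−1}(v,w)), 0]] satisfies φ(v,w)² = (v·wᵀ)·I_{2^n}, hence induces an R-algebra homomorphism from the Clifford algebra Cl(H(R^n)) to M_{2^n}(R). -/

import Mathlib

/-!
Block multiplication turns φ(v,w)² into the block diagonal matrix with blocks S·conj S and
conj S·S, so the first claim is the Suslin identity S·conj S = conj S·S = (v·wᵀ)·I. That identity
follows by induction along the block recursion of S: the diagonal blocks contribute a₀b₀·I plus
the inductive identity for (v₁,w₁), and the off-diagonal blocks cancel because a₀I and b₀I are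
central. Since φ is R-linear, the universal property of the Clifford algebra then yields the
algebra homomorphism.
-/

/-- The pair (S_n(v,w), conj(S_n(v,w))) of Suslin matrices of size 2^n built from
vectors v, w ∈ R^{n+1}, defined recursively: S₀(v,w) = (a₀), conj S₀ = (b₀), and
S_n(v,w) = [[a₀I, S_{n−1}(v₁,w₁)],[−conj S_{n−1}(v₁,w₁), b₀I]],
conj S_n(v,w) = [[b₀I, −S_{n−1}(v₁,w₁)],[conj S_{n−1}(v₁,w₁), a₀I]]. -/
def suslinPair (R : Type*) [CommRing R] :
    (n : ℕ) → (Fin (n + 1) → R) → (Fin (n + 1) → R) →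
      Matrix (Fin (2 ^ n)) (Fin (2 ^ n)) R × Matrix (Fin (2 ^ n)) (Fin (2 ^ n)) R
  | 0, v, w => (v 0 • (1 : Matrix (Fin 1) (Fin 1) R),
                w 0 • (1 : Matrix (Fin 1) (Fin 1) R))
  | n + 1, v, w =>
      let p := suslinPair R n (fun i => v i.succ) (fun i => w i.succ)
      let e : Fin (2 ^ n) ⊕ Fin (2 ^ n) ≃ Fin (2 ^ (n + 1)) :=
        finSumFinEquiv.trans (finCongr (by rw [pow_succ, mul_two]))
      ((Matrix.reindex e e) (Matrix.fromBlocks (v 0 • 1) p.1 (-p.2) (w 0 • 1)),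
       (Matrix.reindex e e) (Matrix.fromBlocks (w 0 • 1) (-p.1) p.2 (v 0 • 1)))


/-- The hyperbolic quadratic form on H(R^n) = R^n ⊕ R^n, q(v,w) = v·wᵀ. -/
def hypForm (R : Type*) [CommRing R] (n : ℕ) :
    QuadraticForm R ((Fin n → R) × (Fin n → R)) :=
  LinearMap.BilinMap.toQuadraticMap <|
    LinearMap.mk₂ R (fun x y => ∑ i, x.1 i * y.2 i)
      (fun x x' y => by simp [add_mul, Finset.sum_add_distrib])
      (fun r x y => by simp [Finset.mul_sum, mul_assoc])
      (fun x y y' => by simp [mul_add, Finset.sum_add_distrib])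
      (fun r x y => by simp [Finset.mul_sum, mul_left_comm])

/-- The Suslin embedding φ : H(R^{m+1}) → M_{2^{m+1}}(R),
φ(v,w) = [[0, S_m(v,w)],[conj S_m(v,w), 0]]. -/
def suslinPhi (R : Type*) [CommRing R] (m : ℕ)
    (p : (Fin (m + 1) → R) × (Fin (m + 1) → R)) :
    Matrix (Fin (2 ^ (m + 1))) (Fin (2 ^ (m + 1))) R :=
  let e : Fin (2 ^ m) ⊕ Fin (2 ^ m) ≃ Fin (2 ^ (m + 1)) :=
    finSumFinEquiv.trans (finCongr (by rw [pow_succ, mul_two]))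
  (Matrix.reindex e e)
    (Matrix.fromBlocks 0 (suslinPair R m p.1 p.2).1 (suslinPair R m p.1 p.2).2 0)

section SuslinMatrices

open Matrix

variable {R : Type*} [CommRing R]

namespace Matrix

variable {k l m : Type*} [DecidableEq k] [DecidableEq l]

theorem fromBlocks_smul_one (c : R) :
    fromBlocks (c • 1) 0 0 (c • 1) = c • (1 : Matrix (k ⊕ l) (k ⊕ l) R) := by
  simp [← fromBlocks_one, fromBlocks_smul]

theorem reindex_mul_reindex_eq_smul_one [Fintype k] [Fintype m] [DecidableEq m] (e : k ≃ m)
    {A B : Matrix k k R} {c : R} (h : A * B = c • 1) : reindex e e A * reindex e e B = c • 1 := by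
  rw [← coe_reindexAlgEquiv R R, ← map_mul, h, map_smul, map_one]

end Matrix

theorem suslinPair_mul_eq_smul_one (n : ℕ) (v w : Fin (n + 1) → R) :
    (suslinPair R n v w).1 * (suslinPair R n v w).2 = (∑ i, v i * w i) • 1 ∧
      (suslinPair R n v w).2 * (suslinPair R n v w).1 = (∑ i, v i * w i) • 1 := by
  induction n with
  | zero => constructor <;> simp [suslinPair, smul_smul, mul_comm]
  | succ n ih =>
    obtain ⟨h₁, h₂⟩ := ih (fun i => v i.succ) (fun i => w i.succ)
    constructor <;>
    · apply reindex_mul_reindex_eq_smul_one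
      rw [fromBlocks_multiply, Fin.sum_univ_succ, ← fromBlocks_smul_one]
      congr 1 <;>
      · simp only [Matrix.neg_mul, Matrix.mul_neg, smul_mul_assoc, mul_smul_comm, one_mul,
          mul_one, smul_smul, h₁, h₂, neg_neg]
        module

theorem suslinPair_add (n : ℕ) (v w v' w' : Fin (n + 1) → R) :
    suslinPair R n (v + v') (w + w') = suslinPair R n v w + suslinPair R n v' w' := by
  induction n with
  | zero => simp [suslinPair, add_smul]
  | succ n ih =>
    have h : suslinPair R n (fun i => (v + v') i.succ) (fun i => (w + w') i.succ) = _ :=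
      ih (fun i => v i.succ) (fun i => w i.succ) (fun i => v' i.succ) (fun i => w' i.succ)
    simp only [suslinPair, h]
    simp only [Prod.fst_add, Prod.snd_add, Prod.mk_add_mk, ← coe_reindexAlgEquiv R R,
      ← map_add, fromBlocks_add, Pi.add_apply, add_smul, neg_add]

theorem suslinPair_smul (n : ℕ) (c : R) (v w : Fin (n + 1) → R) :
    suslinPair R n (c • v) (c • w) = c • suslinPair R n v w := by
  induction n with
  | zero => simp [suslinPair, smul_smul]
  | succ n ih =>
    have h : suslinPair R n (fun i => (c • v) i.succ) (fun i => (c • w) i.succ) = _ :=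
      ih (fun i => v i.succ) (fun i => w i.succ)
    simp only [suslinPair, h]
    simp only [Prod.smul_fst, Prod.smul_snd, Prod.smul_mk, ← coe_reindexAlgEquiv R R,
      ← map_smul, fromBlocks_smul, Pi.smul_apply, smul_eq_mul, mul_smul, smul_neg]

theorem suslinPhi_mul_self (m : ℕ) (p : (Fin (m + 1) → R) × (Fin (m + 1) → R)) :
    suslinPhi R m p * suslinPhi R m p = (∑ i, p.1 i * p.2 i) • 1 := by
  obtain ⟨h₁, h₂⟩ := suslinPair_mul_eq_smul_one m p.1 p.2
  apply reindex_mul_reindex_eq_smul_one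
  rw [fromBlocks_multiply, ← fromBlocks_smul_one]
  simp [h₁, h₂]

def suslinPhiLinearMap (m : ℕ) :
    ((Fin (m + 1) → R) × (Fin (m + 1) → R)) →ₗ[R]
      Matrix (Fin (2 ^ (m + 1))) (Fin (2 ^ (m + 1))) R where
  toFun := suslinPhi R m
  map_add' p q := by
    simp only [suslinPhi, Prod.fst_add, Prod.snd_add, suslinPair_add, ← coe_reindexAlgEquiv R R,
      ← map_add, fromBlocks_add, add_zero]
  map_smul' c p := by
    simp only [suslinPhi, Prod.smul_fst, Prod.smul_snd, suslinPair_smul, ← coe_reindexAlgEquiv R R,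
      ← map_smul, fromBlocks_smul, smul_zero, RingHom.id_apply]

theorem hypForm_apply (n : ℕ) (p : (Fin n → R) × (Fin n → R)) :
    hypForm R n p = ∑ i, p.1 i * p.2 i :=
  rfl

end SuslinMatrices

/-- φ(v,w)² = (v·wᵀ)·I, hence φ induces an R-algebra homomorphism
Cl(H(R^n)) → M_{2^n}(R) (here n = m+1 ≥ 1). -/
theorem suslin_clifford_hom {R : Type*} [CommRing R] (m : ℕ) :
    (∀ p : (Fin (m + 1) → R) × (Fin (m + 1) → R),
      suslinPhi R m p * suslinPhi R m p =
        (∑ i, p.1 i * p.2 i) •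
          (1 : Matrix (Fin (2 ^ (m + 1))) (Fin (2 ^ (m + 1))) R)) ∧
    ∃ g : CliffordAlgebra (hypForm R (m + 1)) →ₐ[R]
        Matrix (Fin (2 ^ (m + 1))) (Fin (2 ^ (m + 1))) R,
      ∀ p, g (CliffordAlgebra.ι (hypForm R (m + 1)) p) = suslinPhi R m p := by
  have hφ (p : (Fin (m + 1) → R) × (Fin (m + 1) → R)) :
      suslinPhiLinearMap m p * suslinPhiLinearMap m p =
        algebraMap R _ (hypForm R (m + 1) p) := by
    rw [Algebra.algebraMap_eq_smul_one, hypForm_apply]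
    exact suslinPhi_mul_self m p
  exact ⟨suslinPhi_mul_self m, CliffordAlgebra.lift _ ⟨suslinPhiLinearMap m, hφ⟩,
    CliffordAlgebra.lift_ι_apply _ _⟩
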